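/- Let T be a finite tree, let 𝒫 be a vertex neighborhood partition of T, let (v,1) be an external vertex of the general corona T∘𝒫, and let (v,A) and (v,B) be two distinct neighbors of (v,1) in T∘𝒫 (i.e., A, B are distinct blocks of 𝒫(v)). Then the graph obtained from T∘𝒫 by contracting (v,A) and (v,B) to a single vertex is again a general corona of a tree; in fact it is isomorphic to T∘𝒫' where 𝒫'(v) = (𝒫(v) ∖ {A,B}) ∪ {A ∪ B} and 𝒫'(x) = 𝒫(x) for all x ≠ v. -/
import Mathlib


open SimpleGraph

namespace GenCorona

universe u

/-- A vertex neighborhood partition of a graph `G`: for every vertex `v`, a partition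
of the open neighborhood `N_G(v)` into nonempty sets. -/
structure NbhdPartition {V : Type u} (G : SimpleGraph V) where
  part : V → Set (Set V)
  nonempty : ∀ v : V, ∀ A ∈ part v, A.Nonempty
  subset_nbhd : ∀ v : V, ∀ A ∈ part v, A ⊆ G.neighborSet v
  covers : ∀ v : V, ∀ u ∈ G.neighborSet v, ∃ A ∈ part v, u ∈ A
  eq_of_inter : ∀ v : V, ∀ A ∈ part v, ∀ B ∈ part v, (A ∩ B).Nonempty → A = B

variable {V : Type u}

/-- The vertex type of the general corona `G ∘ 𝒫`: external vertices `(v,1)` are encoded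
as `Sum.inl v`, internal vertices `(v,A)` (with `A ∈ 𝒫(v)`) as `Sum.inr ⟨(v,A), _⟩`. -/
abbrev CoronaVert (G : SimpleGraph V) (P : NbhdPartition G) : Type u :=
  V ⊕ {p : V × Set V // p.2 ∈ P.part p.1}

/-- The general corona `G ∘ 𝒫`. -/
def corona (G : SimpleGraph V) (P : NbhdPartition G) : SimpleGraph (CoronaVert G P) :=
  SimpleGraph.fromRel fun x y =>
    match x, y with
    | Sum.inl v, Sum.inr p => v = p.val.1
    | Sum.inr p, Sum.inr q =>
        G.Adj p.val.1 q.val.1 ∧ q.val.1 ∈ p.val.2 ∧ p.val.1 ∈ q.val.2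
    | _, _ => False

/-- The set of external vertices of the general corona. -/
def Ext (G : SimpleGraph V) (P : NbhdPartition G) : Set (CoronaVert G P) :=
  Set.range Sum.inl

/-- A graph is a general corona of a tree if it is isomorphic to `T ∘ 𝒫` for some finite
tree `T` and some vertex neighborhood partition `𝒫` of `T`. -/
def IsGeneralCoronaOfTree {W : Type*} (H : SimpleGraph W) : Prop :=
  ∃ (n : ℕ) (T : SimpleGraph (Fin n)) (P : NbhdPartition T),
    T.IsTree ∧ Nonempty (H ≃g corona T P)

/-- A graph `H` is a general corona of a tree with external vertex set `E`. -/
def IsGenCoronaWithExt {W : Type*} (H : SimpleGraph W) (E : Set W) : Prop :=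
  ∃ (n : ℕ) (T : SimpleGraph (Fin n)) (P : NbhdPartition T),
    T.IsTree ∧ ∃ f : H ≃g corona T P, E = ⇑f ⁻¹' Ext T P

/-- `D` is a dominating set of `G`. -/
def IsDominating (G : SimpleGraph V) (D : Set V) : Prop :=
  ∀ v ∉ D, ∃ u ∈ D, G.Adj v u

/-- `S` is a 2-packing of `G`: any two distinct vertices of `S` are at distance
greater than 2 (where the extended distance of unreachable vertices is `⊤`). -/
def Is2Packing (G : SimpleGraph V) (S : Set V) : Prop :=
  ∀ u ∈ S, ∀ v ∈ S, u ≠ v → 2 < G.edist u v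

/-- A leaf is a vertex of degree 1, i.e. with exactly one neighbor. -/
def IsLeaf (G : SimpleGraph V) (v : V) : Prop :=
  (G.neighborSet v).ncard = 1

/-- The domination number: the minimum size of a dominating set. -/
noncomputable def dominationNumber (G : SimpleGraph V) : ℕ :=
  sInf {n : ℕ | ∃ D : Set V, IsDominating G D ∧ D.ncard = n}

/-- The graph obtained from `G` by subdividing every edge in `F` (each once):
for each `e ∈ F` a new vertex `Sum.inr e` replaces the edge `e` by a path of length two. -/
def subdivide (G : SimpleGraph V) (F : Set (Sym2 V)) : SimpleGraph (V ⊕ F) :=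
  SimpleGraph.fromRel fun x y =>
    match x, y with
    | Sum.inl u, Sum.inl v => G.Adj u v ∧ s(u, v) ∉ F
    | Sum.inl u, Sum.inr e => u ∈ e.val
    | _, _ => False

/-- The domination subdivision number `sd(G)`: the minimum number of edges which must be
subdivided (each edge at most once) in order to increase the domination number. -/
noncomputable def sd (G : SimpleGraph V) : ℕ :=
  sInf {k : ℕ | ∃ F : Set (Sym2 V), F ⊆ G.edgeSet ∧ F.ncard = k ∧
    dominationNumber G < dominationNumber (subdivide G F)}

/-- The corona `G ∘ K₁`: attach one new pendant vertex `Sum.inr v` to each vertex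
`Sum.inl v` of `G`. -/
def coronaK1 (G : SimpleGraph V) : SimpleGraph (V ⊕ V) :=
  SimpleGraph.fromRel fun x y =>
    match x, y with
    | Sum.inl u, Sum.inl w => G.Adj u w
    | Sum.inl u, Sum.inr w => u = w
    | _, _ => False

/-- The 2-subdivision `S₂(G)`: every edge `uv` is replaced by a path `(u, x₁, x₂, v)`;
the new vertex `Sum.inr ⟨(u,v), _⟩` is the subdivision vertex adjacent to `u`. -/
def twoSubdivision (G : SimpleGraph V) : SimpleGraph (V ⊕ {p : V × V // G.Adj p.1 p.2}) :=
  SimpleGraph.fromRel fun x y =>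
    match x, y with
    | Sum.inl u, Sum.inr p => u = p.val.1
    | Sum.inr p, Sum.inr q => p.val.1 = q.val.2 ∧ p.val.2 = q.val.1
    | _, _ => False

/-- `𝒫'` is a refinement of `𝒫`. -/
def Refines {G : SimpleGraph V} (P' P : NbhdPartition G) : Prop :=
  ∀ v : V, ∀ A ∈ P'.part v, ∃ B ∈ P.part v, A ⊆ B

/-- The graph obtained by contracting the two vertices `x` and `y` of `G` to the single
vertex `x` (the vertex `y` is removed, and `x` becomes adjacent to all former
neighbors of `y`). -/
def contractPair {W : Type*} (G : SimpleGraph W) (x y : W) :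
    SimpleGraph {w : W // w ≠ y} :=
  SimpleGraph.fromRel fun a b =>
    G.Adj a.val b.val ∨ (a.val = x ∧ G.Adj y b.val) ∨ (b.val = x ∧ G.Adj a.val y)

/-- The graph obtained from `G` by attaching a path `(x, y, z)` (encoded as
`Sum.inr 0, Sum.inr 1, Sum.inr 2`) to the vertex `v` via the edge `v x`. -/
def attachPath3 {W : Type*} (G : SimpleGraph W) (v : W) : SimpleGraph (W ⊕ Fin 3) :=
  SimpleGraph.fromRel fun a b =>
    match a, b with
    | Sum.inl u, Sum.inl w => G.Adj u w
    | Sum.inl u, Sum.inr i => u = v ∧ i = 0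
    | Sum.inr i, Sum.inr j => (i = 0 ∧ j = 1) ∨ (i = 1 ∧ j = 2)
    | _, _ => False

/-- The graph obtained from `G` by attaching a path `(x, y)` (encoded as
`Sum.inr 0, Sum.inr 1`) to the vertex `v` via the edge `v x`. -/
def attachPath2 {W : Type*} (G : SimpleGraph W) (v : W) : SimpleGraph (W ⊕ Fin 2) :=
  SimpleGraph.fromRel fun a b =>
    match a, b with
    | Sum.inl u, Sum.inl w => G.Adj u w
    | Sum.inl u, Sum.inr i => u = v ∧ i = 0
    | Sum.inr i, Sum.inr j => i = 0 ∧ j = 1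
    | _, _ => False

/-- The family `𝓕` of labeled trees; the label of a vertex is `A` when it belongs to the
distinguished set `L`, and `B` otherwise.  The family contains the labeled path `P₄`
(leaves labeled `A`, support vertices labeled `B`) and is closed under the two
attachment operations. -/
inductive LabF : ∀ {W : Type}, SimpleGraph W → Set W → Prop where
  | base : LabF (SimpleGraph.pathGraph 4) ({0, 3} : Set (Fin 4))
  | opA {W : Type} {G : SimpleGraph W} {L : Set W} (v : W) :
      LabF G L → v ∈ L →
        LabF (attachPath3 G v) (Sum.inl '' L ∪ {Sum.inr (2 : Fin 3)})
  | opB {W : Type} {G : SimpleGraph W} {L : Set W} (v : W) :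
      LabF G L → v ∉ L →
        LabF (attachPath2 G v) (Sum.inl '' L ∪ {Sum.inr (1 : Fin 2)})

/-- A tree `T` belongs to the family `𝓕` if it admits a labeling constructed by the
above rules, i.e. it is isomorphic to a member of the inductively generated family. -/
def MemF {W : Type*} (T : SimpleGraph W) : Prop :=
  ∃ (W' : Type) (G : SimpleGraph W') (L : Set W'), LabF G L ∧ Nonempty (T ≃g G)
section Aux

variable {V : Type u}

lemma corona_adj_inl_inl {G : SimpleGraph V} {P : NbhdPartition G} (u w : V) :
    ¬ (corona G P).Adj (Sum.inl u) (Sum.inl w) := by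
  simp [corona, SimpleGraph.fromRel_adj]

lemma corona_adj_inl_inr {G : SimpleGraph V} {P : NbhdPartition G} (u : V)
    (p : {p : V × Set V // p.2 ∈ P.part p.1}) :
    (corona G P).Adj (Sum.inl u) (Sum.inr p) ↔ u = p.val.1 := by
  simp [corona, SimpleGraph.fromRel_adj]

lemma corona_adj_inr_inr {G : SimpleGraph V} {P : NbhdPartition G}
    (p q : {p : V × Set V // p.2 ∈ P.part p.1}) :
    (corona G P).Adj (Sum.inr p) (Sum.inr q) ↔
      G.Adj p.val.1 q.val.1 ∧ q.val.1 ∈ p.val.2 ∧ p.val.1 ∈ q.val.2 := by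
  simp only [corona, SimpleGraph.fromRel_adj]
  constructor
  · rintro ⟨hne, h | h⟩
    · exact h
    · exact ⟨h.1.symm, h.2.2, h.2.1⟩
  · intro h
    refine ⟨?_, Or.inl h⟩
    intro he
    have : p.val.1 = q.val.1 := by
      injection he with he'
      rw [he']
    exact G.ne_of_adj h.1 this

lemma contractPair_adj {W : Type*} (G : SimpleGraph W) (x y : W) (a b : {w : W // w ≠ y}) :
    (contractPair G x y).Adj a b ↔ a ≠ b ∧
      (G.Adj a.val b.val ∨ (a.val = x ∧ G.Adj y b.val) ∨ (b.val = x ∧ G.Adj a.val y)) := by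
  simp only [contractPair, SimpleGraph.fromRel_adj]
  constructor
  · rintro ⟨hne, h | h⟩
    · exact ⟨hne, h⟩
    · refine ⟨hne, ?_⟩
      rcases h with h | h | h
      · exact Or.inl h.symm
      · exact Or.inr (Or.inr ⟨h.1, h.2.symm⟩)
      · exact Or.inr (Or.inl ⟨h.1, h.2.symm⟩)
  · rintro ⟨hne, h⟩
    exact ⟨hne, Or.inl h⟩

end Aux
lemma corona_adj_inr_inl {G : SimpleGraph V} {P : NbhdPartition G} (u : V)
    (p : {p : V × Set V // p.2 ∈ P.part p.1}) :
    (corona G P).Adj (Sum.inr p) (Sum.inl u) ↔ u = p.val.1 := by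
  rw [(corona G P).adj_comm, corona_adj_inl_inr]
variable {V : Type u}

open Classical in
/-- Forward map of the contraction isomorphism (on the full corona vertex type). -/
noncomputable def ctrTo {T : SimpleGraph V} (P P' : NbhdPartition T)
    (v : V) (A B : Set V)
    (hU : A ∪ B ∈ P'.part v)
    (hF : ∀ p : V × Set V, p.2 ∈ P.part p.1 → p ≠ (v, A) → p ≠ (v, B) → p.2 ∈ P'.part p.1) :
    CoronaVert T P → CoronaVert T P'
  | Sum.inl u => Sum.inl u
  | Sum.inr p =>
      if h : p.val = (v, A) ∨ p.val = (v, B) then Sum.inr ⟨(v, A ∪ B), hU⟩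
      else Sum.inr ⟨p.val, hF p.val p.property (fun he => h (Or.inl he)) (fun he => h (Or.inr he))⟩

open Classical in
/-- Inverse map of the contraction isomorphism. -/
noncomputable def ctrFrom {T : SimpleGraph V} (P P' : NbhdPartition T)
    (v : V) (A B : Set V)
    (hA : A ∈ P.part v)
    (hG : ∀ p : V × Set V, p.2 ∈ P'.part p.1 → p ≠ (v, A ∪ B) → p.2 ∈ P.part p.1) :
    CoronaVert T P' → CoronaVert T P
  | Sum.inl u => Sum.inl u
  | Sum.inr p =>
      if h : p.val = (v, A ∪ B) then Sum.inr ⟨(v, A), hA⟩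
      else Sum.inr ⟨p.val, hG p.val p.property h⟩
lemma isTree_of_iso {W W' : Type*} {G : SimpleGraph W} {H : SimpleGraph W'}
    (e : G ≃g H) (h : G.IsTree) : H.IsTree := by
  constructor
  · exact e.connected_iff.mp h.isConnected
  · intro w c hc
    exact h.IsAcyclic (c.map e.symm.toHom)
      ((SimpleGraph.Walk.map_isCycle_iff_of_injective e.symm.injective).mpr hc)

/-- Transport of a neighborhood partition along an equivalence of vertex types. -/
def NbhdPartition.transport {V : Type u} {W : Type w} {T : SimpleGraph V}
    (P : NbhdPartition T) (e : V ≃ W) : NbhdPartition (T.comap ⇑e.symm) where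
  part w := (Set.image ⇑e) '' P.part (e.symm w)
  nonempty w A hA := by
    obtain ⟨C, hC, rfl⟩ := hA
    exact (P.nonempty _ C hC).image _
  subset_nbhd w A hA := by
    obtain ⟨C, hC, rfl⟩ := hA
    rintro x ⟨c, hc, rfl⟩
    have := P.subset_nbhd _ C hC hc
    simp only [SimpleGraph.mem_neighborSet, SimpleGraph.comap_adj, Equiv.symm_apply_apply] at *
    exact this
  covers w u hu := by
    simp only [SimpleGraph.mem_neighborSet, SimpleGraph.comap_adj] at hu
    obtain ⟨C, hC, hmem⟩ := P.covers _ (e.symm u) hu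
    exact ⟨⇑e '' C, ⟨C, hC, rfl⟩, ⟨e.symm u, hmem, e.apply_symm_apply u⟩⟩
  eq_of_inter w A hA B hB hne := by
    obtain ⟨C, hC, rfl⟩ := hA
    obtain ⟨D, hD, rfl⟩ := hB
    rw [← Set.image_inter e.injective] at hne
    rw [P.eq_of_inter _ C hC D hD (hne.of_image)]

/-- A graph isomorphic to a general corona of a tree over a finite vertex type is
a general corona of a tree. -/
lemma isGeneralCoronaOfTree_of_iso {X : Type x} (H : SimpleGraph X)
    {V : Type u} [Fintype V] (T : SimpleGraph V) (P : NbhdPartition T)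
    (hT : T.IsTree) (φ : H ≃g corona T P) : IsGeneralCoronaOfTree H := by
  classical
  set n := Fintype.card V
  set e : V ≃ Fin n := Fintype.equivFin V
  set T' : SimpleGraph (Fin n) := T.comap ⇑e.symm with hT'
  have eIso : T ≃g T' := ⟨e, by simp [hT', SimpleGraph.comap]⟩
  set P'' : NbhdPartition T' := P.transport e with hP''
  refine ⟨n, T', P'', isTree_of_iso eIso hT, ⟨φ.trans ?_⟩⟩
  -- iso : corona T P ≃g corona T' P''
  refine ⟨⟨?toFun, ?invFun, ?li, ?ri⟩, ?mr⟩
  case toFun =>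
    intro x
    match x with
    | Sum.inl u => exact Sum.inl (e u)
    | Sum.inr p => exact Sum.inr ⟨(e p.val.1, ⇑e '' p.val.2), by
        show _ ∈ (Set.image ⇑e) '' P.part (e.symm (e p.val.1))
        rw [e.symm_apply_apply]
        exact ⟨p.val.2, p.property, rfl⟩⟩
  case invFun =>
    intro x
    match x with
    | Sum.inl u => exact Sum.inl (e.symm u)
    | Sum.inr p => exact Sum.inr ⟨(e.symm p.val.1, ⇑e.symm '' p.val.2), by
        obtain ⟨C, hC, hCe⟩ := p.property
        show _ ∈ P.part _
        have : ⇑e.symm '' p.val.2 = C := by rw [← hCe, Equiv.symm_image_image]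
        rw [this]
        exact hC⟩
  case li =>
    rintro (u | p)
    · simp
    · simp only
      congr 1
      refine Subtype.ext (Prod.ext ?_ ?_)
      · exact e.symm_apply_apply _
      · exact Equiv.symm_image_image e _
  case ri =>
    rintro (u | p)
    · simp
    · simp only
      congr 1
      refine Subtype.ext (Prod.ext ?_ ?_)
      · exact e.apply_symm_apply _
      · exact Equiv.image_symm_image e _
  case mr =>
    rintro (u | p) (w | q)
    · simp [corona_adj_inl_inl]
    · simp only [corona_adj_inl_inr, Equiv.coe_fn_mk]
      exact e.apply_eq_iff_eq
    · rw [(corona T' P'').adj_comm, (corona T P).adj_comm]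
      simp only [corona_adj_inl_inr, Equiv.coe_fn_mk]
      exact e.apply_eq_iff_eq
    · simp only [corona_adj_inr_inr, Equiv.coe_fn_mk]
      constructor
      · rintro ⟨ha, hm1, hm2⟩
        refine ⟨?_, ?_, ?_⟩
        · rw [hT'] at ha
          simpa using ha
        · exact (e.injective.mem_set_image).mp hm1
        · exact (e.injective.mem_set_image).mp hm2
      · rintro ⟨ha, hm1, hm2⟩
        refine ⟨?_, ?_, ?_⟩
        · rw [hT']
          simpa using ha
        · exact (e.injective.mem_set_image).mpr hm1
        · exact (e.injective.mem_set_image).mpr hm2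

/-- Contracting two distinct neighbors `(v,A)` and `(v,B)` of an external
vertex `(v,1)` of the general corona `T ∘ 𝒫` of a tree `T` yields a graph isomorphic to
`T ∘ 𝒫'`, where `𝒫'(v) = (𝒫(v) ∖ {A,B}) ∪ {A ∪ B}` and `𝒫'(x) = 𝒫(x)` for `x ≠ v`;
in particular the contracted graph is again a general corona of a tree. -/
theorem contract_neighbors_of_external {V : Type u} [Fintype V]
    (T : SimpleGraph V) (hT : T.IsTree) (P P' : NbhdPartition T)
    (v : V) (A B : Set V) (hA : A ∈ P.part v) (hB : B ∈ P.part v) (hAB : A ≠ B)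
    (hP'v : P'.part v = (P.part v \ {A, B}) ∪ {A ∪ B})
    (hP'x : ∀ x : V, x ≠ v → P'.part x = P.part x) :
    Nonempty
        (contractPair (corona T P) (Sum.inr ⟨(v, A), hA⟩) (Sum.inr ⟨(v, B), hB⟩)
          ≃g corona T P') ∧
      IsGeneralCoronaOfTree
        (contractPair (corona T P) (Sum.inr ⟨(v, A), hA⟩) (Sum.inr ⟨(v, B), hB⟩)) := by
  classical
  have hAne : A ≠ A ∪ B := by
    intro h
    have hBA : B ⊆ A := by rw [h]; exact Set.subset_union_right
    have hne : (A ∩ B).Nonempty := (P.nonempty v B hB).mono (Set.subset_inter hBA subset_rfl)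
    exact hAB (P.eq_of_inter v A hA B hB hne)
  have hBne : B ≠ A ∪ B := by
    intro h
    have hASub : A ⊆ B := by rw [h]; exact Set.subset_union_left
    have hne : (A ∩ B).Nonempty := (P.nonempty v A hA).mono (Set.subset_inter subset_rfl hASub)
    exact hAB (P.eq_of_inter v A hA B hB hne)
  have hUnot : A ∪ B ∉ P.part v := by
    intro h
    have hne : (A ∩ (A ∪ B)).Nonempty :=
      (P.nonempty v A hA).mono (fun x hx => ⟨hx, Or.inl hx⟩)
    exact hAne (P.eq_of_inter v A hA _ h hne)
  have hUmem : A ∪ B ∈ P'.part v := by rw [hP'v]; exact Set.mem_union_right _ rfl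
  have hAnot' : A ∉ P'.part v := by
    rw [hP'v]
    rintro (⟨-, hn⟩ | h)
    · exact hn (Or.inl rfl)
    · exact hAne h
  have hBnot' : B ∉ P'.part v := by
    rw [hP'v]
    rintro (⟨-, hn⟩ | h)
    · exact hn (Or.inr rfl)
    · exact hBne h
  have hF : ∀ p : V × Set V, p.2 ∈ P.part p.1 → p ≠ (v, A) → p ≠ (v, B) →
      p.2 ∈ P'.part p.1 := by
    rintro ⟨u, C⟩ hC h1 h2
    by_cases hu : u = v
    · subst hu
      rw [hP'v]
      refine Set.mem_union_left _ ⟨hC, ?_⟩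
      rintro (rfl | rfl)
      · exact h1 rfl
      · exact h2 rfl
    · rwa [hP'x u hu]
  have hG : ∀ p : V × Set V, p.2 ∈ P'.part p.1 → p ≠ (v, A ∪ B) → p.2 ∈ P.part p.1 := by
    rintro ⟨u, C⟩ hC h1
    by_cases hu : u = v
    · subst hu
      rw [hP'v] at hC
      rcases hC with ⟨hC, -⟩ | hC
      · exact hC
      · rw [Set.mem_singleton_iff] at hC
        rw [show C = A ∪ B from hC] at h1
        exact absurd rfl h1
    · rwa [hP'x u hu] at hC
  set f := ctrTo P P' v A B hUmem hF with hf
  set g := ctrFrom P P' v A B hA hG with hg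
  have hgne : ∀ x : CoronaVert T P',
      g x ≠ Sum.inr (⟨(v, B), hB⟩ : {p : V × Set V // p.2 ∈ P.part p.1}) := by
    rintro (u | p)
    · simp [hg, ctrFrom]
    · simp only [hg, ctrFrom]
      split_ifs with h
      · intro he
        injection he with he'
        exact hAB (congrArg Prod.snd (congrArg Subtype.val he'))
      · intro he
        injection he with he'
        have hpv : p.val = (v, B) := congrArg Subtype.val he'
        have := p.property
        rw [hpv] at this
        exact hBnot' this
  have hgf : ∀ x : CoronaVert T P,
      x ≠ Sum.inr (⟨(v, B), hB⟩ : {p : V × Set V // p.2 ∈ P.part p.1}) → g (f x) = x := by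
    rintro (u | p) hx
    · simp [hf, hg, ctrTo, ctrFrom]
    · have hpB : p.val ≠ (v, B) := fun he => hx (congrArg Sum.inr (Subtype.ext he))
      simp only [hf, ctrTo]
      split_ifs with h
      · rcases h with h | h
        · simp only [hg, ctrFrom, dif_pos rfl]
          exact congrArg Sum.inr (Subtype.ext h.symm)
        · exact absurd h hpB
      · have hpU : p.val ≠ (v, A ∪ B) := by
          intro he
          have := p.property
          rw [he] at this
          exact hUnot this
        simp only [hg, ctrFrom, dif_neg hpU]
  have hfg : ∀ x : CoronaVert T P', f (g x) = x := by
    rintro (u | p)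
    · simp [hf, hg, ctrTo, ctrFrom]
    · simp only [hg, ctrFrom]
      split_ifs with h
      · simp only [hf, ctrTo, dif_pos (Or.inl rfl)]
        exact congrArg Sum.inr (Subtype.ext h.symm)
      · have h1 : p.val ≠ (v, A) := by
          intro he
          have := p.property
          rw [he] at this
          exact hAnot' this
        have h2 : p.val ≠ (v, B) := by
          intro he
          have := p.property
          rw [he] at this
          exact hBnot' this
        simp only [hf, ctrTo, dif_neg (not_or.mpr ⟨h1, h2⟩)]
  let E : {w : CoronaVert T P //
      w ≠ Sum.inr (⟨(v, B), hB⟩ : {p : V × Set V // p.2 ∈ P.part p.1})} ≃ CoronaVert T P' :=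
    { toFun := fun x => f x.val
      invFun := fun x => ⟨g x, hgne x⟩
      left_inv := fun x => Subtype.ext (hgf x.val x.property)
      right_inv := hfg }
  have hiso : contractPair (corona T P) (Sum.inr ⟨(v, A), hA⟩) (Sum.inr ⟨(v, B), hB⟩)
      ≃g corona T P' := by
    refine ⟨E, ?_⟩
    rintro ⟨a, ha⟩ ⟨b, hb⟩
    show (corona T P').Adj (f a) (f b) ↔ _
    rw [contractPair_adj]
    rcases a with u | p <;> rcases b with w | q
    · simp [hf, ctrTo, corona_adj_inl_inl]
    · obtain ⟨⟨q1, q2⟩, hqm⟩ := q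
      have hqB : ((q1, q2) : V × Set V) ≠ (v, B) := by
        intro he
        exact hb (congrArg Sum.inr (Subtype.ext he))
      by_cases hq : ((q1, q2) : V × Set V) = (v, A)
      · rw [Prod.mk.injEq] at hq
        obtain ⟨rfl, rfl⟩ := hq
        simp only [hf, ctrTo, dif_pos (Or.inl rfl)]
        simp [corona_adj_inl_inr, corona_adj_inr_inr, Subtype.ext_iff]
      · simp only [hf, ctrTo, dif_neg (not_or.mpr ⟨hq, hqB⟩)]
        simp [corona_adj_inl_inr, corona_adj_inr_inr, Subtype.ext_iff, hq]
    · obtain ⟨⟨p1, p2⟩, hpm⟩ := p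
      have hpB : ((p1, p2) : V × Set V) ≠ (v, B) := by
        intro he
        exact ha (congrArg Sum.inr (Subtype.ext he))
      by_cases hp : ((p1, p2) : V × Set V) = (v, A)
      · rw [Prod.mk.injEq] at hp
        obtain ⟨rfl, rfl⟩ := hp
        simp only [hf, ctrTo, dif_pos (Or.inl rfl)]
        simp [corona_adj_inr_inl, corona_adj_inr_inr, Subtype.ext_iff]
      · simp only [hf, ctrTo, dif_neg (not_or.mpr ⟨hp, hpB⟩)]
        simp [corona_adj_inr_inl, corona_adj_inr_inr, Subtype.ext_iff, hp]
    · obtain ⟨⟨p1, p2⟩, hpm⟩ := p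
      obtain ⟨⟨q1, q2⟩, hqm⟩ := q
      have hpB : ((p1, p2) : V × Set V) ≠ (v, B) := by
        intro he
        exact ha (congrArg Sum.inr (Subtype.ext he))
      have hqB : ((q1, q2) : V × Set V) ≠ (v, B) := by
        intro he
        exact hb (congrArg Sum.inr (Subtype.ext he))
      by_cases hp : ((p1, p2) : V × Set V) = (v, A) <;>
        by_cases hq : ((q1, q2) : V × Set V) = (v, A)
      · rw [Prod.mk.injEq] at hp hq
        obtain ⟨rfl, rfl⟩ := hp
        obtain ⟨rfl, rfl⟩ := hq
        simp only [hf, ctrTo, dif_pos (Or.inl rfl)]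
        simp [corona_adj_inr_inr, Subtype.ext_iff, T.irrefl]
      · rw [Prod.mk.injEq] at hp
        obtain ⟨rfl, rfl⟩ := hp
        simp only [hf, ctrTo, dif_pos (Or.inl rfl), dif_neg (not_or.mpr ⟨hq, hqB⟩)]
        simp [corona_adj_inr_inr, Subtype.ext_iff, Ne.symm hq, Prod.ext_iff]
        tauto
      · rw [Prod.mk.injEq] at hq
        obtain ⟨rfl, rfl⟩ := hq
        simp only [hf, ctrTo, dif_pos (Or.inl rfl), dif_neg (not_or.mpr ⟨hp, hpB⟩)]
        simp [corona_adj_inr_inr, Subtype.ext_iff, hp, Prod.ext_iff]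
        tauto
      · simp only [hf, ctrTo, dif_neg (not_or.mpr ⟨hp, hpB⟩), dif_neg (not_or.mpr ⟨hq, hqB⟩)]
        simp only [corona_adj_inr_inr]
        constructor
        · rintro ⟨h1, h2, h3⟩
          refine ⟨?_, Or.inl ⟨h1, h2, h3⟩⟩
          intro he
          rw [Subtype.mk.injEq, Sum.inr.injEq, Subtype.mk.injEq, Prod.mk.injEq] at he
          exact T.ne_of_adj h1 he.1
        · rintro ⟨hne, h | h | h⟩
          · exact h
          · exact absurd (by injection h.1 with h'; exact congrArg Subtype.val h') hp
          · exact absurd (by injection h.1 with h'; exact congrArg Subtype.val h') hq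
  refine ⟨⟨hiso⟩, isGeneralCoronaOfTree_of_iso _ T P' hT hiso⟩
end GenCorona
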